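/- Let G be a finite graph not containing K_t as an odd minor. Then there exists a partition X₁,…,Xₙ of V(G) such that each G[Xᵢ] is bipartite, and the quotient graph H on {1,…,n} (with i ∼ j iff there is an edge of G between Xᵢ and Xⱼ) does not contain K_t as a minor. -/

import Mathlib

/-- `G` contains `K t` as a minor: there are `t` pairwise vertex-disjoint subtrees of `G`
with at least one edge of `G` between any two of them. -/
def HasKMinor {V : Type*} (G : SimpleGraph V) (t : ℕ) : Prop :=
  ∃ T : Fin t → G.Subgraph,
    (∀ i, (T i).coe.IsTree) ∧
    (Pairwise fun i j => Disjoint (T i).verts (T j).verts) ∧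
    (∀ i j : Fin t, i ≠ j → ∃ u ∈ (T i).verts, ∃ v ∈ (T j).verts, G.Adj u v)

/-- `G` contains `K t` as an odd minor: there are `t` pairwise vertex-disjoint subtrees of `G`,
one connecting edge `e i j` of `G` between any two of them, and a `2`-coloring `c` of the
vertices making every tree edge bichromatic and every connecting edge monochromatic. -/
def HasOddKMinor {V : Type*} (G : SimpleGraph V) (t : ℕ) : Prop :=
  ∃ (T : Fin t → G.Subgraph) (e : Fin t → Fin t → V × V) (c : V → Bool),
    (∀ i, (T i).coe.IsTree) ∧
    (Pairwise fun i j => Disjoint (T i).verts (T j).verts) ∧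
    (∀ i j : Fin t, i ≠ j →
      (e i j).1 ∈ (T i).verts ∧ (e i j).2 ∈ (T j).verts ∧ G.Adj (e i j).1 (e i j).2) ∧
    (∀ i, ∀ u v : V, (T i).Adj u v → c u ≠ c v) ∧
    (∀ i j : Fin t, i ≠ j → c (e i j).1 = c (e i j).2)


/-!
Among all partitions of `V` into parts inducing connected bipartite subgraphs, equipped with a
common `2`-colouring `κ` of the parts, take one with the fewest parts (singletons give one).
Two adjacent parts joined only by bichromatic edges could be merged into a single part, and so
could two parts joined only by monochromatic edges after flipping `κ` on one of them. Hence any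
two adjacent parts are joined both by a bichromatic and by a monochromatic edge. A `K_t`-minor of
the quotient now lifts: the union of the parts in a branch set is connected through bichromatic
edges, so it has a spanning tree on which `κ` alternates, and monochromatic edges join the
branch sets.
-/

namespace SimpleGraph

variable {V ι : Type*}

lemma exists_subgraph_isTree_of_connected_induce {G B : SimpleGraph V} (hB : B ≤ G) {s : Set V}
    (h : (B.induce s).Connected) :
    ∃ T : G.Subgraph, T.verts = s ∧ T.coe.IsTree ∧ T.spanningCoe ≤ B := by
  obtain ⟨T, hT, htree⟩ := h.exists_isTree_le
  refine ⟨{ verts := s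
            Adj a b := ∃ (ha : a ∈ s) (hb : b ∈ s), T.Adj ⟨a, ha⟩ ⟨b, hb⟩
            adj_sub := fun ⟨_, _, h⟩ => hB (hT h)
            edge_vert := fun ⟨ha, _, _⟩ => ha
            symm := ⟨fun _ _ ⟨ha, hb, h⟩ => ⟨hb, ha, h.symm⟩⟩ },
    rfl, ?_, fun _ _ ⟨_, _, h⟩ => hT h⟩
  convert htree using 1
  ext u v
  exact ⟨fun ⟨_, _, h⟩ => h, fun h => ⟨u.2, v.2, h⟩⟩

theorem connected_induce_preimage {B : SimpleGraph V} {K : SimpleGraph ι} {π : V → ι}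
    (hπ : Function.Surjective π) (hfib : ∀ v, (B.induce {u | π u = π v}).Preconnected)
    (hK : ∀ ⦃p q⦄, K.Adj p q → ∃ u v, π u = p ∧ π v = q ∧ B.Adj u v)
    {s : Set ι} (hs : (K.induce s).Connected) : (B.induce (π ⁻¹' s)).Connected := by
  set R := (B.induce (π ⁻¹' s)).Reachable
  have fiber : ∀ x y : π ⁻¹' s, π x = π y → R x y := fun x y hxy =>
    (hfib x ⟨x, rfl⟩ ⟨y, hxy.symm⟩).map
      (induceHomOfLE B fun u (hu : π u = π x) => show π u ∈ s from hu ▸ x.2).toHom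
  let Q (p q : s) : Prop := ∀ x y : π ⁻¹' s, π x = p → π y = q → R x y
  have Q_trans : ∀ {p q r}, Q p q → Q q r → Q p r := fun {p q r} hpq hqr x y hx hy => by
    obtain ⟨z, hz⟩ := hπ q
    exact (hpq x ⟨z, show π z ∈ s from hz ▸ q.2⟩ hx hz).trans (hqr _ y hz hy)
  have Q_adj : ∀ {p q}, (K.induce s).Adj p q → Q p q := fun {p q} hpq x y hx hy => by
    obtain ⟨u, v, hup, hvq, huv⟩ := hK hpq
    have hu : π u ∈ s := hup ▸ p.2
    have hv : π v ∈ s := hvq ▸ q.2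
    have huv' : (B.induce (π ⁻¹' s)).Adj ⟨u, hu⟩ ⟨v, hv⟩ := huv
    exact ((fiber x ⟨u, hu⟩ (hx.trans hup.symm)).trans huv'.reachable).trans
      (fiber ⟨v, hv⟩ y (hvq.trans hy.symm))
  have Q_walk : ∀ {p q}, (K.induce s).Walk p q → Q p q := by
    intro p q w
    induction w with
    | nil => exact fun x y hx hy => fiber x y (hx.trans hy.symm)
    | cons h _ ih => exact Q_trans (Q_adj h) ih
  obtain ⟨p⟩ := hs.nonempty
  obtain ⟨v, hv⟩ := hπ p
  have : Nonempty (π ⁻¹' s) := ⟨⟨v, show π v ∈ s from hv ▸ p.2⟩⟩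
  exact ⟨fun x y =>
    (hs.preconnected ⟨π x, x.2⟩ ⟨π y, y.2⟩).elim (Q_walk · x y rfl rfl)⟩

/-- The fibres of `π` induce connected subgraphs of `G`, all properly `2`-coloured by `κ`. -/
structure IsBipartitePartition (G : SimpleGraph V) (π : V → ι) (κ : V → Bool) : Prop where
  preconnected : ∀ v, (G.induce {u | π u = π v}).Preconnected
  proper : ∀ ⦃u v⦄, G.Adj u v → π u = π v → κ u ≠ κ v

structure IsTightPartition (G : SimpleGraph V) (π : V → ι) (κ : V → Bool) : Prop
    extends G.IsBipartitePartition π κ where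
  exists_adj_eq : ∀ ⦃a b⦄, G.Adj a b → π a ≠ π b →
    ∃ u v, π u = π a ∧ π v = π b ∧ G.Adj u v ∧ κ u = κ v
  exists_adj_ne : ∀ ⦃a b⦄, G.Adj a b → π a ≠ π b →
    ∃ u v, π u = π a ∧ π v = π b ∧ G.Adj u v ∧ κ u ≠ κ v

lemma isBipartitePartition_id (G : SimpleGraph V) :
    G.IsBipartitePartition id fun _ => true where
  preconnected v := by
    have : Subsingleton {u | id u = id v} := ⟨fun x y => Subtype.ext (x.2.trans y.2.symm)⟩
    exact Preconnected.of_subsingleton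
  proper u v huv h := (G.ne_of_adj huv h).elim

variable {G : SimpleGraph V} {π : V → ι} {κ : V → Bool}

namespace IsBipartitePartition

lemma xor (hπ : G.IsBipartitePartition π κ) (f : ι → Bool) :
    G.IsBipartitePartition π fun v => xor (f (π v)) (κ v) where
  preconnected := hπ.preconnected
  proper u v huv h := by
    simpa only [h, ne_eq, Bool.xor_right_inj] using hπ.proper huv h

lemma colorable_induce (hπ : G.IsBipartitePartition π κ) (v : V) :
    (G.induce {u | π u = π v}).Colorable 2 :=
  (Coloring.mk (fun u : {u | π u = π v} => κ u) fun {u w} huw =>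
    hπ.proper huw (u.2.trans w.2.symm)).colorable

theorem exists_ncard_range_lt_of_forall_ne [Finite V] (hπ : G.IsBipartitePartition π κ)
    {a b : V} (hab : G.Adj a b) (hne : π a ≠ π b)
    (h : ∀ u v, π u = π a → π v = π b → G.Adj u v → κ u ≠ κ v) :
    ∃ π' : V → ι, G.IsBipartitePartition π' κ ∧
      (Set.range π').ncard < (Set.range π).ncard := by
  classical
  set π' : V → ι := fun v => if π v = π b then π a else π v with hπ'
  refine ⟨π', ⟨fun v => ?_, fun u v huv h' => ?_⟩, Set.ncard_lt_ncard ?_⟩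
  · by_cases hv : π' v = π a
    · have : {u | π' u = π' v} = {u | π u = π a} ∪ {u | π u = π b} := by
        ext u; simp only [hπ', Set.mem_ofPred_eq, Set.mem_union]; grind
      rw [this]
      exact (connected_induce_union (hπ.preconnected a) (hπ.preconnected b) rfl rfl
        hab).preconnected
    · have : {u | π' u = π' v} = {u | π u = π v} := by
        ext u; simp only [hπ', Set.mem_ofPred_eq] at hv ⊢; grind
      rw [this]
      exact hπ.preconnected v
  · simp only [hπ'] at h'
    split_ifs at h' with hu hv hv
    · exact hπ.proper huv (hu.trans hv.symm)
    · exact (h v u h'.symm hu huv.symm).symm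
    · exact h u v h' hv huv
    · exact hπ.proper huv h'
  · refine (Set.ssubset_iff_of_subset ?_).2 ⟨π b, ⟨b, rfl⟩, ?_⟩
    · rintro _ ⟨v, rfl⟩
      by_cases hv : π v = π b
      · exact ⟨a, by simp only [hπ', hv, if_true]⟩
      · exact ⟨v, by simp only [hπ', hv, if_false]⟩
    · rintro ⟨v, hv⟩
      simp only [hπ'] at hv
      split_ifs at hv with h
      · exact hne hv
      · exact h hv

theorem exists_ncard_range_lt_of_forall_eq [Finite V] (hπ : G.IsBipartitePartition π κ)
    {a b : V} (hab : G.Adj a b) (hne : π a ≠ π b)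
    (h : ∀ u v, π u = π a → π v = π b → G.Adj u v → κ u = κ v) :
    ∃ (π' : V → ι) (κ' : V → Bool), G.IsBipartitePartition π' κ' ∧
      (Set.range π').ncard < (Set.range π).ncard := by
  classical
  -- flipping `κ` on the part of `b` makes every edge between the two parts bichromatic
  obtain ⟨π', hπ', hlt⟩ :=
    (hπ.xor fun p => decide (p = π b)).exists_ncard_range_lt_of_forall_ne hab hne
      fun u v hu hv huv => by simp [hu, hv, hne, h u v hu hv huv]
  exact ⟨π', _, hπ', hlt⟩

end IsBipartitePartition

theorem exists_isTightPartition [Finite V] (G : SimpleGraph V) :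
    ∃ (π : V → V) (κ : V → Bool), G.IsTightPartition π κ := by
  obtain ⟨⟨π, κ⟩, hπ, hmin⟩ :=
    (measure fun x : (V → V) × (V → Bool) => (Set.range x.1).ncard).wf.has_min
      {x | G.IsBipartitePartition x.1 x.2} ⟨(id, fun _ => true), G.isBipartitePartition_id⟩
  refine ⟨π, κ, hπ, fun a b hab hne => ?_, fun a b hab hne => ?_⟩
  · by_contra! h
    obtain ⟨π', hπ', hlt⟩ := hπ.exists_ncard_range_lt_of_forall_ne hab hne
      fun u v hu hv huv => h u v hu hv huv
    exact hmin (π', κ) hπ' hlt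
  · by_contra! h
    obtain ⟨π', κ', hπ', hlt⟩ := hπ.exists_ncard_range_lt_of_forall_eq hab hne
      fun u v hu hv huv => h u v hu hv huv
    exact hmin (π', κ') hπ' hlt

theorem IsTightPartition.of_eq_iff {ι' : Type*} {π' : V → ι'} (hπ : G.IsTightPartition π κ)
    (h : ∀ u v, π' u = π' v ↔ π u = π v) : G.IsTightPartition π' κ := by
  obtain ⟨⟨h₁, h₂⟩, h₃, h₄⟩ := hπ
  have fiber_eq v : {u | π' u = π' v} = {u | π u = π v} := Set.ext fun u => h u v
  exact ⟨⟨fun v => fiber_eq v ▸ h₁ v, by simpa only [h] using h₂⟩,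
    by simpa only [ne_eq, h] using h₃, by simpa only [ne_eq, h] using h₄⟩

theorem _root_.Function.exists_surjective_fin_eq_iff [Finite V] (π : V → ι) :
    ∃ (n : ℕ) (π' : V → Fin n), π'.Surjective ∧ ∀ u v, π' u = π' v ↔ π u = π v :=
  ⟨_, Finite.equivFin (Set.range π) ∘ Set.rangeFactorization π,
    (Finite.equivFin _).surjective.comp Set.rangeFactorization_surjective,
    fun _ _ => (Finite.equivFin _).injective.eq_iff.trans Subtype.ext_iff⟩

theorem IsTightPartition.hasOddKMinor {π : V → ι} (hπ : G.IsTightPartition π κ)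
    (hsurj : π.Surjective) {H : SimpleGraph ι}
    (hH : ∀ ⦃p q⦄, H.Adj p q → ∃ u v, π u = p ∧ π v = q ∧ G.Adj u v) {t : ℕ}
    (hminor : HasKMinor H t) : HasOddKMinor G t := by
  obtain ⟨S, hS, hSdisj, hSadj⟩ := hminor
  -- the bichromatic edges of `G`
  set B := G ⊓ (⊤ : SimpleGraph Bool).comap κ
  have hB : ∀ ⦃p q⦄, H.Adj p q → ∃ u v, π u = p ∧ π v = q ∧ B.Adj u v := by
    intro p q hpq
    obtain ⟨a, b, rfl, rfl, hab⟩ := hH hpq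
    obtain ⟨u, v, hu, hv, huv, hne⟩ := hπ.exists_adj_ne hab hpq.ne
    exact ⟨u, v, hu, hv, huv, hne⟩
  have hfib v : (B.induce {u | π u = π v}).Preconnected :=
    (hπ.preconnected v).mono fun x y hxy => ⟨hxy, hπ.proper hxy (x.2.trans y.2.symm)⟩
  have hT i :
      ∃ T : G.Subgraph, T.verts = π ⁻¹' (S i).verts ∧ T.coe.IsTree ∧ T.spanningCoe ≤ B :=
    exists_subgraph_isTree_of_connected_induce inf_le_left <| connected_induce_preimage hsurj hfib
      hB (Subgraph.Connected.induce_verts ⟨(hS i).connected⟩)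
  choose T hTverts hT hTB using hT
  have he i j : ∃ e : V × V, i ≠ j →
      (e.1 ∈ (T i).verts ∧ e.2 ∈ (T j).verts ∧ G.Adj e.1 e.2) ∧ κ e.1 = κ e.2 := by
    by_cases hij : i = j
    · obtain ⟨v⟩ := (hT i).connected.nonempty
      exact ⟨(v, v), fun h => (h hij).elim⟩
    obtain ⟨p, hp, q, hq, hpq⟩ := hSadj i j hij
    obtain ⟨a, b, rfl, rfl, hab⟩ := hH hpq
    obtain ⟨u, v, hu, hv, huv, heq⟩ := hπ.exists_adj_eq hab hpq.ne
    refine ⟨(u, v), fun _ => ⟨⟨?_, ?_, huv⟩, heq⟩⟩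
    · rw [hTverts, Set.mem_preimage, hu]; exact hp
    · rw [hTverts, Set.mem_preimage, hv]; exact hq
  choose e he using he
  refine ⟨T, e, κ, hT, fun i j hij => ?_, fun i j hij => (he i j hij).1,
    fun i u v huv => (hTB i huv).2, fun i j hij => (he i j hij).2⟩
  simp only [hTverts]
  exact (hSdisj hij).preimage π

end SimpleGraph

open SimpleGraph in
theorem stmt4 {V : Type*} [Fintype V] (G : SimpleGraph V) (t : ℕ)
    (hG : ¬ HasOddKMinor G t) :
    ∃ (n : ℕ) (X : Fin n → Set V) (H : SimpleGraph (Fin n)),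
      (∀ v : V, ∃! i, v ∈ X i) ∧
      (∀ i, (G.induce (X i)).Colorable 2) ∧
      (∀ i j, H.Adj i j ↔ i ≠ j ∧ ∃ u ∈ X i, ∃ v ∈ X j, G.Adj u v) ∧
      ¬ HasKMinor H t := by
  obtain ⟨π₀, κ, hπ₀⟩ := G.exists_isTightPartition
  obtain ⟨n, π, hsurj, hππ₀⟩ := π₀.exists_surjective_fin_eq_iff
  have hπ := hπ₀.of_eq_iff hππ₀
  let H : SimpleGraph (Fin n) :=
    { Adj i j := i ≠ j ∧ ∃ u ∈ {v | π v = i}, ∃ v ∈ {v | π v = j}, G.Adj u v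
      symm := ⟨fun _ _ ⟨hij, u, hu, v, hv, huv⟩ => ⟨hij.symm, v, hv, u, hu, huv.symm⟩⟩
      loopless := ⟨fun _ h => h.1 rfl⟩ }
  refine ⟨n, fun i => {v | π v = i}, H, fun v => ⟨π v, rfl, fun _ h => h.symm⟩, fun i => ?_,
    fun _ _ => Iff.rfl, fun hminor => hG (hπ.hasOddKMinor hsurj ?_ hminor)⟩
  · obtain ⟨v, rfl⟩ := hsurj i
    exact hπ.colorable_induce v
  · rintro _ _ ⟨-, u, rfl, v, rfl, huv⟩
    exact ⟨u, v, rfl, rfl, huv⟩
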